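/- arXiv:2504.20594 — 2 statements merged into one kernel-verified Lean document; each statement's English description precedes it below -/
import Mathlib

section
/- Let ℓ ≥ 2 be a prime, and define the probability distribution π on ℤ_{≥0} by π(r) = (∏_{j=1}^∞ 1/(1+ℓ^{-j})) · ∏_{j=1}^r ℓ/(ℓ^j - 1). Then π is a stationary distribution for the Markov operator M_ℓ defined by transition probabilities p(r, r-1) = 1 - ℓ^{-r} and p(r, r+1) = ℓ^{-r}: for every s ≥ 0, ∑_{r} π(r) p(r,s) = π(s). -/
open scoped BigOperators

/-- Transition probabilities of the Markov operator `M_ℓ`. -/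
noncomputable def Mstep (ℓ : ℕ) (r s : ℕ) : ℝ :=
  if s + 1 = r then 1 - ((ℓ : ℝ) ^ r)⁻¹
  else if s = r + 1 then ((ℓ : ℝ) ^ r)⁻¹
  else 0

/-- The Poonen–Rains distribution `π(r) = (∏_{j≥1} 1/(1+ℓ^{-j})) ∏_{j=1}^r ℓ/(ℓ^j - 1)`. -/
noncomputable def PRdist (ℓ : ℕ) (r : ℕ) : ℝ :=
  (∏' j : ℕ, (1 + ((ℓ : ℝ) ^ (j + 1))⁻¹)⁻¹) *
    ∏ j ∈ Finset.range r, (ℓ : ℝ) / ((ℓ : ℝ) ^ (j + 1) - 1)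

lemma PRdist_succ (ℓ : ℕ) (r : ℕ) :
    PRdist ℓ (r + 1) = PRdist ℓ r * ((ℓ : ℝ) / ((ℓ : ℝ) ^ (r + 1) - 1)) := by
  unfold PRdist
  rw [Finset.prod_range_succ]
  ring

/-- `π` is a stationary distribution of the Markov operator `M_ℓ`. -/
theorem stmt1 (ℓ : ℕ) (hℓ : ℓ.Prime) (s : ℕ) :
    ∑' r : ℕ, PRdist ℓ r * Mstep ℓ r s = PRdist ℓ s := by
  have hl2 : (2 : ℝ) ≤ (ℓ : ℝ) := by exact_mod_cast hℓ.two_le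
  have hl0 : (ℓ : ℝ) ≠ 0 := by positivity
  have hpow : ∀ n : ℕ, (1 : ℝ) < (ℓ : ℝ) ^ (n + 1) := by
    intro n
    calc (1 : ℝ) < 2 := one_lt_two
    _ ≤ (ℓ : ℝ) := hl2
    _ = (ℓ : ℝ) ^ 1 := (pow_one _).symm
    _ ≤ (ℓ : ℝ) ^ (n + 1) := by
        apply pow_le_pow_right₀ (by linarith) (by omega)
  have hne : ∀ n : ℕ, (ℓ : ℝ) ^ (n + 1) - 1 ≠ 0 := fun n => by
    have := hpow n; linarith
  have hpne : ∀ n : ℕ, (ℓ : ℝ) ^ n ≠ 0 := fun n => pow_ne_zero _ hl0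
  cases s with
  | zero =>
    rw [tsum_eq_single 1 (by
      intro b hb
      have h1 : ¬ (0 + 1 = b) := by omega
      have h2 : ¬ (0 = b + 1) := by omega
      simp [Mstep, h1, h2])]
    rw [show (1 : ℕ) = 0 + 1 from rfl, PRdist_succ]
    simp only [Mstep, if_true, if_pos rfl]
    have h1 := hne 0
    have key : (ℓ : ℝ) / ((ℓ : ℝ) ^ (0 + 1) - 1) * (1 - ((ℓ : ℝ) ^ (0 + 1))⁻¹) = 1 := by
      rw [pow_one] at h1
      rw [pow_one]
      field_simp
    rw [mul_assoc, key, mul_one]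
  | succ t =>
    rw [tsum_eq_sum (s := {t, t + 2}) (by
      intro b hb
      simp only [Finset.mem_insert, Finset.mem_singleton] at hb
      have h1 : ¬ (t + 1 + 1 = b) := by omega
      have h2 : ¬ (t + 1 = b + 1) := by omega
      have h3 : ¬ (t = b) := by omega
      simp [Mstep, h1, h2, h3])]
    rw [Finset.sum_pair (by omega)]
    have e1 : Mstep ℓ t (t + 1) = ((ℓ : ℝ) ^ t)⁻¹ := by
      have h1 : ¬ (t + 1 + 1 = t) := by omega
      simp [Mstep, h1]
    have e2 : Mstep ℓ (t + 2) (t + 1) = 1 - ((ℓ : ℝ) ^ (t + 2))⁻¹ := by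
      simp [Mstep]
    rw [e1, e2, show t + 2 = (t + 1) + 1 from rfl, PRdist_succ, PRdist_succ]
    have h1 := hne t
    have h2 := hne (t + 1)
    have h3 := hpne t
    have h4 := hpne (t + 2)
    field_simp
    ring
end

section
/- Let ℓ ≥ 5, and let ρ ∈ [0,1] be a real number, c = ∏_{j=1}^∞ 1/(1+ℓ^{-j}), and a_k = ∏_{j=1}^k ℓ/(ℓ^j-1). Then the tail bound holds: c·(ρ·∑_{k ≥ m+2, k even} a_k + (1-ρ)·∑_{k ≥ m+1, k odd} a_k) ≤ ∑_{k ≥ m+1} c·a_k ≤ 2·ℓ^{-m(m+1)/2} for every integer m ≥ 1. -/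
open scoped BigOperators

/-- `c = ∏_{j=1}^∞ 1/(1+ℓ^{-j})`. -/
noncomputable def PRconst (ℓ : ℕ) : ℝ :=
  ∏' j : ℕ, (1 + ((ℓ : ℝ) ^ (j + 1))⁻¹)⁻¹

/-- `a_k = ∏_{j=1}^k ℓ/(ℓ^j - 1)`. -/
noncomputable def PRweight (ℓ : ℕ) (k : ℕ) : ℝ :=
  ∏ j ∈ Finset.range k, (ℓ : ℝ) / ((ℓ : ℝ) ^ (j + 1) - 1)

/-- Auxiliary product `∏_{j=1}^k (1 - ℓ^{-j})`. -/
noncomputable def PRbprod (ℓ : ℕ) (k : ℕ) : ℝ :=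
  ∏ j ∈ Finset.range k, (1 - ((ℓ : ℝ) ^ (j + 1))⁻¹)

section Aux

variable {ℓ : ℕ}

lemma PRL5 (h5 : 5 ≤ ℓ) : (5 : ℝ) ≤ (ℓ : ℝ) := by exact_mod_cast h5

lemma PRLpos (h5 : 5 ≤ ℓ) : (0 : ℝ) < (ℓ : ℝ) := lt_of_lt_of_le (by norm_num) (PRL5 h5)

lemma PRpow_ge (h5 : 5 ≤ ℓ) (j : ℕ) : (5 : ℝ) ≤ (ℓ : ℝ) ^ (j + 1) := by
  calc (5:ℝ) = 5 ^ 1 := by norm_num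
  _ ≤ 5 ^ (j+1) := by
      apply pow_le_pow_right₀ (by norm_num) (by omega)
  _ ≤ (ℓ:ℝ) ^ (j+1) := by
      apply pow_le_pow_left₀ (by norm_num) (PRL5 h5)

lemma PRconst_nonneg (h5 : 5 ≤ ℓ) : 0 ≤ PRconst ℓ := by
  unfold PRconst
  by_cases hM : Multipliable (fun j : ℕ => (1 + ((ℓ : ℝ) ^ (j + 1))⁻¹)⁻¹)
  · refine ge_of_tendsto' hM.hasProd fun s => Finset.prod_nonneg fun j _ => ?_
    have := PRpow_ge h5 j
    positivity
  · rw [tprod_eq_one_of_not_multipliable hM]; norm_num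

lemma PRconst_le_one (h5 : 5 ≤ ℓ) : PRconst ℓ ≤ 1 := by
  unfold PRconst
  by_cases hM : Multipliable (fun j : ℕ => (1 + ((ℓ : ℝ) ^ (j + 1))⁻¹)⁻¹)
  · refine le_of_tendsto' hM.hasProd fun s => Finset.prod_le_one
      (fun j _ => ?_) (fun j _ => ?_)
    · have := PRpow_ge h5 j; positivity
    · have h1 : (0:ℝ) < (ℓ : ℝ) ^ (j + 1) := lt_of_lt_of_le (by norm_num) (PRpow_ge h5 j)
      have : (1:ℝ) ≤ 1 + ((ℓ : ℝ) ^ (j + 1))⁻¹ := by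
        have : (0:ℝ) ≤ ((ℓ : ℝ) ^ (j + 1))⁻¹ := by positivity
        linarith
      exact inv_le_one_of_one_le₀ this
  · rw [tprod_eq_one_of_not_multipliable hM]

lemma PRweight_pos (h5 : 5 ≤ ℓ) (k : ℕ) : 0 < PRweight ℓ k := by
  unfold PRweight
  refine Finset.prod_pos fun j _ => div_pos (PRLpos h5) ?_
  have := PRpow_ge h5 j; linarith

lemma PRbprod_ge (h5 : 5 ≤ ℓ) (k : ℕ) :
    3/4 + ((ℓ : ℝ) ^ k)⁻¹ / 4 ≤ PRbprod ℓ k := by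
  have hL := PRL5 h5
  induction k with
  | zero => simp [PRbprod]; norm_num
  | succ k ih =>
    rw [PRbprod, Finset.prod_range_succ, ← PRbprod]
    set x : ℝ := ((ℓ : ℝ) ^ k)⁻¹ with hx
    set y : ℝ := ((ℓ : ℝ) ^ (k+1))⁻¹ with hy
    have hLpos := PRLpos h5
    have hpk : (0:ℝ) < (ℓ:ℝ)^k := pow_pos hLpos k
    have hpk1 : (0:ℝ) < (ℓ:ℝ)^(k+1) := pow_pos hLpos (k+1)
    have hypos : 0 < y := by positivity
    have hxy : x = (ℓ:ℝ) * y := by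
      rw [hx, hy, pow_succ]
      field_simp
    have hx1 : x ≤ 1 := by
      rw [hx]
      exact inv_le_one_of_one_le₀ (one_le_pow₀ (by linarith))
    have hyx : y ≤ x := by nlinarith
    have hy1 : y ≤ 1 := le_trans hyx hx1
    nlinarith [ih, mul_le_mul_of_nonneg_right (ih) (by linarith : (0:ℝ) ≤ 1 - y)]

lemma PRweight_mul_bprod (h5 : 5 ≤ ℓ) (k : ℕ) :
    PRweight ℓ k * PRbprod ℓ k = ((ℓ : ℝ) ^ (k * (k-1) / 2))⁻¹ := by
  have hLpos := PRLpos h5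
  induction k with
  | zero => simp [PRweight, PRbprod]
  | succ k ih =>
    have hexp : (k+1) * k / 2 = k * (k-1) / 2 + k := by
      have e1 : (k+1) * k = k * (k-1) + 2 * k := by
        cases k with
        | zero => rfl
        | succ n => simp [Nat.succ_sub_one]; ring
      have e2 : 2 ∣ k * (k - 1) := by
        cases k with
        | zero => simp
        | succ n => simpa [Nat.succ_sub_one, Nat.mul_comm] using (Nat.even_mul_succ_self n).two_dvd
      omega
    have hne : ((ℓ:ℝ) ^ (k+1) - 1) ≠ 0 := ne_of_gt (by have := PRpow_ge h5 k; linarith)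
    have hne2 : ((ℓ:ℝ) ^ (k+1)) ≠ 0 := by positivity
    have hfac : (ℓ:ℝ) / ((ℓ:ℝ) ^ (k+1) - 1) * (1 - ((ℓ:ℝ) ^ (k+1))⁻¹) = ((ℓ:ℝ)^k)⁻¹ := by
      have hk : ((ℓ:ℝ)^k) ≠ 0 := by positivity
      field_simp
      ring
    rw [PRweight, PRbprod, Finset.prod_range_succ, Finset.prod_range_succ,
      ← PRweight, ← PRbprod]
    have : PRweight ℓ k * ((ℓ:ℝ) / ((ℓ:ℝ) ^ (k+1) - 1)) *
        (PRbprod ℓ k * (1 - ((ℓ:ℝ) ^ (k+1))⁻¹)) =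
        (PRweight ℓ k * PRbprod ℓ k) * ((ℓ:ℝ) / ((ℓ:ℝ) ^ (k+1) - 1) *
          (1 - ((ℓ:ℝ) ^ (k+1))⁻¹)) := by ring
    rw [this, ih, hfac, Nat.succ_sub_one, hexp, pow_add, mul_inv]

lemma PRweight_le (h5 : 5 ≤ ℓ) (k : ℕ) :
    PRweight ℓ k ≤ 4/3 * ((ℓ : ℝ) ^ (k * (k-1) / 2))⁻¹ := by
  have hid := PRweight_mul_bprod h5 k
  have hb : 3/4 ≤ PRbprod ℓ k := by
    have := PRbprod_ge h5 k
    have : (0:ℝ) ≤ ((ℓ : ℝ) ^ k)⁻¹ / 4 := by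
      have := PRLpos h5; positivity
    linarith [PRbprod_ge h5 k]
  have ha := (PRweight_pos h5 k).le
  nlinarith [mul_le_mul_of_nonneg_left hb ha]

lemma PRweight_succ (k : ℕ) :
    PRweight ℓ (k+1) = PRweight ℓ k * ((ℓ:ℝ) / ((ℓ:ℝ) ^ (k+1) - 1)) := by
  rw [PRweight, Finset.prod_range_succ, ← PRweight]

lemma PRratio (h5 : 5 ≤ ℓ) {k : ℕ} (hk : 2 ≤ k) :
    PRweight ℓ (k+1) ≤ PRweight ℓ k * ((ℓ:ℝ))⁻¹ := by
  rw [PRweight_succ]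
  have hLpos := PRLpos h5
  have hL := PRL5 h5
  refine mul_le_mul_of_nonneg_left ?_ (PRweight_pos h5 k).le
  have h3 : (ℓ:ℝ)^3 ≤ (ℓ:ℝ)^(k+1) := pow_le_pow_right₀ (by linarith) (by omega)
  have hd : (0:ℝ) < (ℓ:ℝ)^(k+1) - 1 := by have := PRpow_ge h5 k; linarith
  rw [div_le_iff₀ hd, inv_mul_eq_div, le_div_iff₀ hLpos]
  have hsq : (ℓ:ℝ) * (ℓ:ℝ) + 1 ≤ (ℓ:ℝ)^3 := by nlinarith
  nlinarith

lemma PRshift (h5 : 5 ≤ ℓ) {m : ℕ} (hm : 1 ≤ m) (i : ℕ) :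
    PRweight ℓ (m+1+i) ≤ PRweight ℓ (m+1) * ((ℓ:ℝ)⁻¹) ^ i := by
  induction i with
  | zero => simp
  | succ i ih =>
    have h2 : 2 ≤ m + 1 + i := by omega
    calc PRweight ℓ (m+1+(i+1)) = PRweight ℓ ((m+1+i)+1) := by ring_nf
    _ ≤ PRweight ℓ (m+1+i) * (ℓ:ℝ)⁻¹ := PRratio h5 h2
    _ ≤ PRweight ℓ (m+1) * ((ℓ:ℝ)⁻¹) ^ i * (ℓ:ℝ)⁻¹ := by
        refine mul_le_mul_of_nonneg_right ih ?_
        have := PRLpos h5; positivity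
    _ = PRweight ℓ (m+1) * ((ℓ:ℝ)⁻¹) ^ (i+1) := by ring

lemma PRsummable (h5 : 5 ≤ ℓ) : Summable (PRweight ℓ) := by
  refine summable_of_ratio_norm_eventually_le (r := 1/2) (by norm_num) ?_
  filter_upwards [Filter.eventually_ge_atTop 1] with n hn
  have hLpos := PRLpos h5
  have hL := PRL5 h5
  rw [Real.norm_eq_abs, Real.norm_eq_abs, abs_of_pos (PRweight_pos h5 _),
    abs_of_pos (PRweight_pos h5 _), PRweight_succ, mul_comm (1/2 : ℝ)]
  refine mul_le_mul_of_nonneg_left ?_ (PRweight_pos h5 n).le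
  have h2 : (ℓ:ℝ)^2 ≤ (ℓ:ℝ)^(n+1) := pow_le_pow_right₀ (by linarith) (by omega)
  have hd : (0:ℝ) < (ℓ:ℝ)^(n+1) - 1 := by have := PRpow_ge h5 n; linarith
  rw [div_le_iff₀ hd]
  nlinarith

end Aux

/-- Quantitative tail bound for the Poonen–Rains distribution: the (parity-weighted)
tail mass beyond `m` is at most `2·ℓ^{-m(m+1)/2}`. -/
theorem stmt18 (ℓ : ℕ) (hℓ : ℓ.Prime) (h5 : 5 ≤ ℓ) (ρ : ℝ)
    (hρ0 : 0 ≤ ρ) (hρ1 : ρ ≤ 1) (m : ℕ) (hm : 1 ≤ m) :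
    PRconst ℓ * (ρ * ∑' k : ℕ, (if m + 2 ≤ k ∧ Even k then PRweight ℓ k else 0) +
        (1 - ρ) * ∑' k : ℕ, (if m + 1 ≤ k ∧ Odd k then PRweight ℓ k else 0)) ≤
      (∑' k : ℕ, (if m + 1 ≤ k then PRconst ℓ * PRweight ℓ k else 0)) ∧
    ∑' k : ℕ, (if m + 1 ≤ k then PRconst ℓ * PRweight ℓ k else 0) ≤
      2 * ((ℓ : ℝ) ^ (m * (m + 1) / 2))⁻¹ := by
  have hL := PRL5 h5
  have hLpos := PRLpos h5
  have hsum := PRsummable h5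
  have hwpos := PRweight_pos h5
  have hc0 := PRconst_nonneg h5
  have hc1 := PRconst_le_one h5
  -- summability of indicator sums
  have hS : Summable (fun k : ℕ => if m + 1 ≤ k then PRweight ℓ k else 0) := by
    refine Summable.of_nonneg_of_le (fun k => ?_) (fun k => ?_) hsum
    · split
      · exact (hwpos k).le
      · exact le_rfl
    · split
      · exact le_rfl
      · exact (hwpos k).le
  have hA : Summable (fun k : ℕ => if m + 2 ≤ k ∧ Even k then PRweight ℓ k else 0) := by
    refine Summable.of_nonneg_of_le (fun k => ?_) (fun k => ?_) hsum
    · split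
      · exact (hwpos k).le
      · exact le_rfl
    · split
      · exact le_rfl
      · exact (hwpos k).le
  have hB : Summable (fun k : ℕ => if m + 1 ≤ k ∧ Odd k then PRweight ℓ k else 0) := by
    refine Summable.of_nonneg_of_le (fun k => ?_) (fun k => ?_) hsum
    · split
      · exact (hwpos k).le
      · exact le_rfl
    · split
      · exact le_rfl
      · exact (hwpos k).le
  -- rewrite the middle sum
  have hrw : (∑' k : ℕ, (if m + 1 ≤ k then PRconst ℓ * PRweight ℓ k else 0)) =
      PRconst ℓ * ∑' k : ℕ, (if m + 1 ≤ k then PRweight ℓ k else 0) := by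
    rw [← tsum_mul_left]
    refine tsum_congr fun k => ?_
    split <;> simp
  set S := ∑' k : ℕ, (if m + 1 ≤ k then PRweight ℓ k else 0) with hSdef
  have hS0 : 0 ≤ S := tsum_nonneg fun k => by
    by_cases h : m + 1 ≤ k <;> simp only [h, if_true, if_false]
    · exact (hwpos k).le
    · exact le_rfl
  constructor
  · -- first inequality
    rw [hrw]
    have hAle : (∑' k : ℕ, (if m + 2 ≤ k ∧ Even k then PRweight ℓ k else 0)) ≤ S := by
      refine Summable.tsum_le_tsum (fun k => ?_) hA hS
      by_cases h : m + 2 ≤ k ∧ Even k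
      · rw [if_pos h, if_pos (by omega : m + 1 ≤ k)]
      · rw [if_neg h]
        split
        · exact (hwpos k).le
        · exact le_rfl
    have hBle : (∑' k : ℕ, (if m + 1 ≤ k ∧ Odd k then PRweight ℓ k else 0)) ≤ S := by
      refine Summable.tsum_le_tsum (fun k => ?_) hB hS
      by_cases h : m + 1 ≤ k ∧ Odd k
      · rw [if_pos h, if_pos h.1]
      · rw [if_neg h]
        split
        · exact (hwpos k).le
        · exact le_rfl
    refine mul_le_mul_of_nonneg_left ?_ hc0
    nlinarith [mul_le_mul_of_nonneg_left hAle hρ0,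
      mul_le_mul_of_nonneg_left hBle (by linarith : (0:ℝ) ≤ 1 - ρ)]
  · -- second inequality
    rw [hrw]
    have hcS : PRconst ℓ * S ≤ S := by nlinarith
    refine le_trans hcS ?_
    -- compute S as a shifted sum
    have hshift : S = ∑' i : ℕ, PRweight ℓ (m + 1 + i) := by
      rw [hSdef, ← Summable.sum_add_tsum_nat_add (m+1) hS]
      have h1 : ∀ i ∈ Finset.range (m+1),
          (if m + 1 ≤ i then PRweight ℓ i else 0) = 0 := by
        intro i hi
        rw [if_neg (by simp at hi; omega)]
      rw [Finset.sum_eq_zero h1, zero_add]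
      refine tsum_congr fun i => ?_
      rw [if_pos (by omega), add_comm i (m+1)]
    have hinv0 : (0:ℝ) ≤ (ℓ:ℝ)⁻¹ := by positivity
    have hinv1 : (ℓ:ℝ)⁻¹ < 1 := by
      rw [inv_lt_one_iff₀]; right; linarith
    have hgeom : Summable (fun i : ℕ => PRweight ℓ (m+1) * ((ℓ:ℝ)⁻¹) ^ i) :=
      (summable_geometric_of_lt_one hinv0 hinv1).mul_left _
    have hsumshift : Summable (fun i : ℕ => PRweight ℓ (m + 1 + i)) := by
      have := (summable_nat_add_iff (m+1)).2 hsum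
      refine this.congr fun i => ?_
      rw [add_comm i (m+1)]
    have hle1 : S ≤ PRweight ℓ (m+1) * (1 - (ℓ:ℝ)⁻¹)⁻¹ := by
      rw [hshift]
      calc ∑' i : ℕ, PRweight ℓ (m + 1 + i)
          ≤ ∑' i : ℕ, PRweight ℓ (m+1) * ((ℓ:ℝ)⁻¹) ^ i :=
            Summable.tsum_le_tsum (fun i => PRshift h5 hm i) hsumshift hgeom
        _ = PRweight ℓ (m+1) * (1 - (ℓ:ℝ)⁻¹)⁻¹ := by
            rw [tsum_mul_left, tsum_geometric_of_lt_one hinv0 hinv1]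
    have hexp : (m+1) * ((m+1) - 1) / 2 = m * (m + 1) / 2 := by
      simp [Nat.mul_comm]
    have hw := PRweight_le h5 (m+1)
    rw [hexp] at hw
    set P : ℝ := ((ℓ:ℝ) ^ (m * (m + 1) / 2))⁻¹ with hP
    have hP0 : 0 ≤ P := by positivity
    have hfrac : (1 - (ℓ:ℝ)⁻¹)⁻¹ ≤ 5/4 := by
      have h15 : (ℓ:ℝ)⁻¹ ≤ 1/5 := by
        rw [inv_le_comm₀ hLpos (by norm_num)]
        norm_num; linarith
      have h45 : (4/5 : ℝ) ≤ 1 - (ℓ:ℝ)⁻¹ := by linarith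
      calc (1 - (ℓ:ℝ)⁻¹)⁻¹ ≤ (4/5 : ℝ)⁻¹ := by
            apply inv_anti₀ (by norm_num) h45
        _ = 5/4 := by norm_num
    calc S ≤ PRweight ℓ (m+1) * (1 - (ℓ:ℝ)⁻¹)⁻¹ := hle1
      _ ≤ (4/3 * P) * (5/4) := by
          refine mul_le_mul hw hfrac ?_ (by positivity)
          have : (0:ℝ) < 1 - (ℓ:ℝ)⁻¹ := by linarith [hinv1]
          positivity
      _ = 5/3 * P := by ring
      _ ≤ 2 * P := by nlinarith
end
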